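/- Let $p$ be a prime, let $i \geq 1$, and for each integer $d$ with $1 \leq d \leq i$ and $p \nmid d$ let $r(d)$ denote the number of natural numbers $s$ with $p^s d \leq i$. Then the $p$-adic valuation of the product $\prod_{\substack{1 \leq d \leq i \\ p \nmid d}} \ \prod_{k=0}^{r(d)-1} p^{r(d)-1-k} \left( i + 1 - p^{r(d)-1-k} d \right)$ equals $v_p\big((i!)^2\big) = 2\, v_p(i!)$. -/

import Mathlib

/-!
Every `m ∈ [1, i]` is uniquely `p ^ e * d` with `p ∤ d`, and for a given `d` the admissible
exponents are exactly `e < r d`. Reversing the inner product, the factor indexed by `(d, e)` is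
`p ^ e * (i + 1 - m) = ordProj[p] m * (i + 1 - m)`, so the double product is
`∏_{m ≤ i} ordProj[p] m * (i + 1 - m)`. Its `p`-adic valuation is `∑ v_p(m) + ∑ v_p(i + 1 - m)`,
and both sums equal `v_p(i!)`.
-/

open Finset

namespace Nat

theorem pow_mul_le_iff_le_log {b d n e : ℕ} (hb : 1 < b) (hd : 0 < d) (hdn : d ≤ n) :
    b ^ e * d ≤ n ↔ e ≤ log b (n / d) := by
  rw [← Nat.le_div_iff_mul_le hd, le_log_iff_pow_le hb (Nat.div_pos hdn hd).ne']

theorem card_setOf_pow_mul_le {b d n : ℕ} (hb : 1 < b) (hd : 0 < d) (hdn : d ≤ n) :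
    Nat.card {s : ℕ | b ^ s * d ≤ n} = log b (n / d) + 1 := by
  have hset : {s : ℕ | b ^ s * d ≤ n} = Set.Iic (log b (n / d)) := by
    ext s
    exact pow_mul_le_iff_le_log hb hd hdn
  rw [hset, Nat.card_coe_set_eq, Set.ncard_Iic_nat]

theorem ordProj_pow_mul_of_not_dvd {p d : ℕ} (e : ℕ) (hp : p.Prime) (hd : ¬p ∣ d) :
    ordProj[p] (p ^ e * d) = p ^ e := by
  have hd0 : d ≠ 0 := by rintro rfl; exact hd (dvd_zero p)
  have h := ordProj_mul_ordCompl_eq_self (p ^ e * d) p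
  rw [ordCompl_pow_mul_of_not_dvd e hp hd] at h
  exact Nat.eq_of_mul_eq_mul_right (Nat.pos_of_ne_zero hd0) h

theorem prod_not_dvd_prod_pow_mul_eq_prod_Icc {M : Type*} [CommMonoid M] {p : ℕ} (hp : p.Prime)
    (n : ℕ) (f : ℕ → M) :
    ∏ d ∈ (Icc 1 n).filter (fun d => ¬p ∣ d), ∏ e ∈ range (log p (n / d) + 1), f (p ^ e * d)
      = ∏ m ∈ Icc 1 n, f m := by
  rw [prod_sigma']
  refine prod_nbij' (fun x => p ^ x.2 * x.1) (fun m => ⟨ordCompl[p] m, m.factorization p⟩)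
    ?_ ?_ ?_ ?_ (fun _ _ => rfl)
  · rintro ⟨d, e⟩ hde
    simp only [mem_sigma, mem_filter, mem_Icc, mem_range, Nat.lt_succ_iff] at hde
    obtain ⟨⟨⟨hd, hdn⟩, -⟩, he⟩ := hde
    rw [mem_Icc]
    exact ⟨Nat.mul_pos (pow_pos hp.pos e) hd,
      (pow_mul_le_iff_le_log hp.one_lt hd hdn).mpr he⟩
  · intro m hm
    rw [mem_Icc] at hm
    have hm0 : m ≠ 0 := by omega
    have hcn : ordCompl[p] m ≤ n := (ordCompl_le m p).trans hm.2
    simp only [mem_sigma, mem_filter, mem_Icc, mem_range, Nat.lt_succ_iff]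
    refine ⟨⟨⟨ordCompl_pos p hm0, hcn⟩, not_dvd_ordCompl hp hm0⟩, ?_⟩
    rw [← pow_mul_le_iff_le_log hp.one_lt (ordCompl_pos p hm0) hcn,
      ordProj_mul_ordCompl_eq_self]
    exact hm.2
  · rintro ⟨d, e⟩ hde
    simp only [mem_sigma, mem_filter] at hde
    have hv : (p ^ e * d).factorization p = e :=
      Nat.pow_right_injective hp.two_le (ordProj_pow_mul_of_not_dvd e hp hde.1.2)
    exact Sigma.ext (ordCompl_pow_mul_of_not_dvd e hp hde.1.2) (heq_of_eq hv)
  · intro m _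
    exact ordProj_mul_ordCompl_eq_self m p

theorem sum_Icc_reflect {M : Type*} [AddCommMonoid M] (f : ℕ → M) (n : ℕ) :
    ∑ m ∈ Icc 1 n, f (n + 1 - m) = ∑ m ∈ Icc 1 n, f m := by
  refine sum_nbij' (fun m => n + 1 - m) (fun m => n + 1 - m) ?_ ?_ ?_ ?_ fun _ _ => rfl <;>
    intro m hm <;> simp only [mem_Icc] at hm ⊢ <;> omega

theorem factorization_factorial_eq_sum_Icc (n p : ℕ) :
    (n !).factorization p = ∑ m ∈ Icc 1 n, m.factorization p := by
  rw [← prod_Ico_id_eq_factorial, Ico_add_one_right_eq_Icc,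
    factorization_prod fun m hm => by rw [mem_Icc] at hm; omega, Finset.sum_apply']

theorem factorization_prod_ordProj_mul_sub {p : ℕ} (hp : p.Prime) (n : ℕ) :
    (∏ m ∈ Icc 1 n, ordProj[p] m * (n + 1 - m)).factorization p
      = 2 * (n !).factorization p := by
  have hsub : ∀ m ∈ Icc 1 n, n + 1 - m ≠ 0 := fun m hm => by rw [mem_Icc] at hm; omega
  have hterm : ∀ m ∈ Icc 1 n, (ordProj[p] m * (n + 1 - m)).factorization p
      = m.factorization p + (n + 1 - m).factorization p := fun m hm => by
    rw [factorization_mul (pow_ne_zero _ hp.ne_zero) (hsub m hm), Finsupp.add_apply,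
      hp.factorization_pow, Finsupp.single_eq_same]
  rw [factorization_prod fun m hm => mul_ne_zero (pow_ne_zero _ hp.ne_zero) (hsub m hm),
    Finset.sum_apply', sum_congr rfl hterm, sum_add_distrib, sum_Icc_reflect (fun m => m.factorization p),
    ← factorization_factorial_eq_sum_Icc, two_mul]

end Nat

theorem factorization_prod_prod_eq_two_mul_general
    (p : ℕ) (hp : p.Prime) (i : ℕ) (r : ℕ → ℕ)
    (hr : ∀ d ∈ (Finset.Icc 1 i).filter (fun d => ¬ p ∣ d),
      r d = Nat.card {s : ℕ | p ^ s * d ≤ i}) :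
    (∏ d ∈ (Finset.Icc 1 i).filter (fun d => ¬ p ∣ d),
      ∏ k ∈ Finset.range (r d),
        p ^ (r d - 1 - k) * (i + 1 - p ^ (r d - 1 - k) * d)).factorization p
      = ((Nat.factorial i) ^ 2).factorization p ∧
    ((Nat.factorial i) ^ 2).factorization p = 2 * (Nat.factorial i).factorization p := by
  have hsq : ((Nat.factorial i) ^ 2).factorization p = 2 * (Nat.factorial i).factorization p := by
    rw [Nat.factorization_pow, Finsupp.smul_apply, smul_eq_mul]
  refine ⟨?_, hsq⟩
  rw [hsq, ← Nat.factorization_prod_ordProj_mul_sub hp,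
    ← Nat.prod_not_dvd_prod_pow_mul_eq_prod_Icc hp i]
  refine congrArg (fun m : ℕ => m.factorization p) (prod_congr rfl fun d hd => ?_)
  obtain ⟨hdi, hpd⟩ := mem_filter.mp hd
  rw [mem_Icc] at hdi
  rw [hr d hd, Nat.card_setOf_pow_mul_le hp.one_lt hdi.1 hdi.2,
    prod_range_reflect (fun e => p ^ e * (i + 1 - p ^ e * d))]
  exact prod_congr rfl fun e _ => by rw [Nat.ordProj_pow_mul_of_not_dvd e hp hpd]

/-- Let `p` be prime, `i ≥ 1`, and for `1 ≤ d ≤ i` with `p ∤ d` let `r d` be the number of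
natural numbers `s` with `p^s * d ≤ i`.  Then the `p`-adic valuation of
`∏ d, ∏ k < r d, p^(r d - 1 - k) * (i + 1 - p^(r d - 1 - k) * d)` equals
`v_p((i!)^2) = 2 * v_p(i!)`. -/
theorem factorization_prod_prod_eq_two_mul
    (p : ℕ) (hp : p.Prime) (i : ℕ) (hi : 1 ≤ i) (r : ℕ → ℕ)
    (hr : ∀ d ∈ (Finset.Icc 1 i).filter (fun d => ¬ p ∣ d),
      r d = Nat.card {s : ℕ | p ^ s * d ≤ i}) :
    (∏ d ∈ (Finset.Icc 1 i).filter (fun d => ¬ p ∣ d),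
      ∏ k ∈ Finset.range (r d),
        p ^ (r d - 1 - k) * (i + 1 - p ^ (r d - 1 - k) * d)).factorization p
      = ((Nat.factorial i) ^ 2).factorization p ∧
    ((Nat.factorial i) ^ 2).factorization p = 2 * (Nat.factorial i).factorization p :=
  factorization_prod_prod_eq_two_mul_general p hp i r hr
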